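/- Suppose the presentation ⟨X|R⟩ is side-confluent. Then: (1) every element of K⟨X⟩ admits a unique normal form for ⟨X|R⟩; (2) the set of images in A = K⟨X⟩/I(R) of the words of ⟨X⟩ that are normal forms is a K-basis of A; (3) an element f of K⟨X⟩ belongs to I(R) if and only if its normal form equals 0. -/

import Mathlib

open scoped TensorProduct
set_option linter.unusedSectionVars false

def altProd {A : Type*} [Monoid A] (t s : A) (k : ℕ) : A :=
  if Even k then (t * s) ^ (k / 2) else s * (t * s) ^ (k / 2)

namespace CC

variable (K : Type*) [Field K] (X : Type*) [Fintype X] [LinearOrder X]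

abbrev F : Type _ := MonoidAlgebra K (FreeMonoid X)

noncomputable def wd (w : FreeMonoid X) : F K X := MonoidAlgebra.of K (FreeMonoid X) w

def wlen (w : FreeMonoid X) : ℕ := (FreeMonoid.toList w).length

noncomputable instance : LinearOrder (FreeMonoid X) :=
  LinearOrder.lift' (fun w => FreeMonoid.toList w) (fun _ _ h => FreeMonoid.toList.injective h)

noncomputable def lm (f : F K X) : FreeMonoid X := (f.coeff.support.max).unbotD 1

/-- The homogeneous component `V^{⊗m} = KX^{(m)}` of `K⟨X⟩`:
elements supported on words of length `m`. -/
noncomputable def degSub (m : ℕ) : Submodule K (F K X) where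
  carrier := {f | ∀ w ∈ f.coeff.support, wlen X w = m}
  add_mem' := by
    intro a b ha hb w hw
    rcases Finset.mem_union.mp (Finsupp.support_add hw) with h | h
    · exact ha w h
    · exact hb w h
  zero_mem' := by intro w hw; simp at hw
  smul_mem' := by intro c f hf w hw; exact hf w (Finsupp.support_smul hw)

lemma mem_degSub {m : ℕ} {f : F K X} :
    f ∈ degSub K X m ↔ ∀ w ∈ f.coeff.support, wlen X w = m := Iff.rfl

/-- `l_N(2k) = kN`, `l_N(2k+1) = kN + 1`. -/
def lN (N n : ℕ) : ℕ := if Even n then (n / 2) * N else (n / 2) * N + 1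

/-- The homogeneous component `I(R)_m` of the two-sided ideal generated by `R`:
`I(R)_m = Σ_{i=0}^{m−N} V^{⊗i}·R̄·V^{⊗m−N−i}` for `m ≥ N` and `I(R)_m = 0` for `m < N`. -/
noncomputable def idealPiece (N : ℕ) (R : Set (F K X)) (m : ℕ) : Submodule K (F K X) :=
  if m < N then ⊥
  else ⨆ i ∈ Finset.range (m - N + 1),
    degSub K X i * Submodule.span K R * degSub K X (m - N - i)

/-- The two-sided ideal `I(R)` of `K⟨X⟩` generated by `R`, as a `K`-subspace. -/
noncomputable def idealSpan (R : Set (F K X)) : Submodule K (F K X) :=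
  Submodule.span K {x | ∃ u v : FreeMonoid X, ∃ g ∈ R, x = wd K X u * g * wd K X v}

/-- `J_0 = K`, `J_1 = V`, and `J_n = ⋂_{i=0}^{l_N(n)−N} V^{⊗i}·R̄·V^{⊗l_N(n)−N−i}` for `n ≥ 2`. -/
noncomputable def Jspace (N : ℕ) (R : Set (F K X)) : ℕ → Submodule K (F K X)
  | 0 => degSub K X 0
  | 1 => degSub K X 1
  | (n + 2) => ⨅ i ∈ Finset.range (lN N (n + 2) - N + 1),
      degSub K X i * Submodule.span K R * degSub K X (lN N (n + 2) - N - i)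

open Classical in
/-- The reduction `r_{u·g·v}` of the presentation `⟨X|R⟩`: the linear endomorphism of `K⟨X⟩`
fixing every word other than `u·lm(g)·v` and sending `u·lm(g)·v` to `u·(lm(g)−g)·v`. -/
noncomputable def redMap (u : FreeMonoid X) (g : F K X) (v : FreeMonoid X) :
    F K X →ₗ[K] F K X :=
  Finsupp.linearCombination K (fun w : FreeMonoid X =>
    if w = u * lm K X g * v then wd K X u * (wd K X (lm K X g) - g) * wd K X v
    else wd K X w) ∘ₗ (MonoidAlgebra.coeffLinearEquiv K).toLinearMap

/-- `f` is a normal form for `⟨X|R⟩` if it is fixed by every reduction. -/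
def IsNormalForm (R : Set (F K X)) (f : F K X) : Prop :=
  ∀ u v : FreeMonoid X, ∀ g ∈ R, redMap K X u g v f = f

/-- `g` is a normal form of `f`: `g` is a normal form and is obtained from `f` by applying a
finite sequence of reductions of `⟨X|R⟩`. -/
def NormalFormOf (R : Set (F K X)) (f g : F K X) : Prop :=
  IsNormalForm K X R g ∧
    ∃ L : List (FreeMonoid X × F K X × FreeMonoid X),
      (∀ p ∈ L, p.2.1 ∈ R) ∧
      g = L.foldr (fun p h => redMap K X p.1 p.2.1 p.2.2 h) f

/-- The presentation `⟨X|R⟩` is reduced: for every `f ∈ R`, `lm(f) − f` is a normal form for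
`⟨X|R⟩` and `lm(f)` is a normal form for `⟨X | R∖{f}⟩`. -/
def Reduced (R : Set (F K X)) : Prop :=
  ∀ f ∈ R, IsNormalForm K X R (wd K X (lm K X f) - f) ∧
    IsNormalForm K X (R \ {f}) (wd K X (lm K X f))

/-- `R` consists of `N`-homogeneous elements with leading coefficient `1`. -/
def NHomogLC1 (N : ℕ) (R : Set (F K X)) : Prop :=
  ∀ f ∈ R, f ∈ degSub K X N ∧ f.coeff (lm K X f) = 1

open Classical in
/-- The operator `S` of the presentation `⟨X|R⟩`: the endomorphism of `V^{⊗N}` sending `lm(f)`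
to `lm(f) − f` for every `f ∈ R` and fixing all other words (extended by the identity on words
of other lengths). -/
noncomputable def Sop (R : Set (F K X)) : F K X →ₗ[K] F K X :=
  Finsupp.linearCombination K (fun w : FreeMonoid X =>
    if h : ∃ f ∈ R, lm K X f = w then wd K X w - h.choose else wd K X w) ∘ₗ
    (MonoidAlgebra.coeffLinearEquiv K).toLinearMap

/-- `S ⊗ id_{V^{⊗b}}` realized on `K⟨X⟩`: on a word of length `a + b`, apply `S` to the first
`a` letters and the identity to the last `b` letters; the identity on all other words. -/
noncomputable def applyLeft (S : F K X →ₗ[K] F K X) (a b : ℕ) : F K X →ₗ[K] F K X :=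
  Finsupp.linearCombination K (fun w : FreeMonoid X =>
    if wlen X w = a + b then
      S (wd K X (FreeMonoid.ofList ((FreeMonoid.toList w).take a))) *
        wd K X (FreeMonoid.ofList ((FreeMonoid.toList w).drop a))
    else wd K X w) ∘ₗ (MonoidAlgebra.coeffLinearEquiv K).toLinearMap

/-- `id_{V^{⊗a}} ⊗ S` realized on `K⟨X⟩`: on a word of length `a + b`, apply the identity to
the first `a` letters and `S` to the last `b` letters; the identity on all other words. -/
noncomputable def applyRight (S : F K X →ₗ[K] F K X) (a b : ℕ) : F K X →ₗ[K] F K X :=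
  Finsupp.linearCombination K (fun w : FreeMonoid X =>
    if wlen X w = a + b then
      wd K X (FreeMonoid.ofList ((FreeMonoid.toList w).take a)) *
        S (wd K X (FreeMonoid.ofList ((FreeMonoid.toList w).drop a)))
    else wd K X w) ∘ₗ (MonoidAlgebra.coeffLinearEquiv K).toLinearMap

/-- The presentation `⟨X|R⟩` is side-confluent: for every `1 ≤ m ≤ N−1` there exists `k ≥ 1`
with `⟨id_{V^{⊗m}}⊗S, S⊗id_{V^{⊗m}}⟩^k = ⟨S⊗id_{V^{⊗m}}, id_{V^{⊗m}}⊗S⟩^k` on `V^{⊗N+m}`. -/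
def SideConfluent (N : ℕ) (R : Set (F K X)) : Prop :=
  ∀ m : ℕ, 1 ≤ m → m ≤ N - 1 →
    ∃ k : ℕ, 1 ≤ k ∧
      ∀ f ∈ degSub K X (N + m),
        altProd (applyRight K X (Sop K X R) m N) (applyLeft K X (Sop K X R) N m) k f =
          altProd (applyLeft K X (Sop K X R) N m) (applyRight K X (Sop K X R) m N) k f

/-- The extra-condition: `(V^{⊗n}⊗R̄) ∩ (R̄⊗V^{⊗n}) ⊆ V^{⊗n−1}⊗R̄⊗V` for every `2 ≤ n ≤ N−1`. -/
def ExtraCondition (N : ℕ) (R : Set (F K X)) : Prop :=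
  ∀ n : ℕ, 2 ≤ n → n ≤ N - 1 →
    (degSub K X n * Submodule.span K R) ⊓ (Submodule.span K R * degSub K X n) ≤
      degSub K X (n - 1) * Submodule.span K R * degSub K X 1

/-- A reduction operator relative to `X^{(m)}`, realized as a linear endomorphism of `K⟨X⟩`
extended by the identity outside of `V^{⊗m}`: an idempotent operator fixing each word of
length `m` or mapping it to an element of `V^{⊗m}` all of whose monomials are strictly
smaller. -/
structure IsRedOp (m : ℕ) (T : F K X →ₗ[K] F K X) : Prop where
  idem : T ∘ₗ T = T
  le : ∀ w : FreeMonoid X, wlen X w = m →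
    T (wd K X w) = wd K X w ∨
      (T (wd K X w) ∈ degSub K X m ∧ ∀ u ∈ (T (wd K X w)).coeff.support, u < w)
  other : ∀ w : FreeMonoid X, wlen X w ≠ m → T (wd K X w) = wd K X w

/-- The kernel `I(R)_{m−l_N(n)} ⊗ V^{⊗l_N(n)}` of the reduction operator `F_1^{n,m}`. -/
noncomputable def ker1 (N : ℕ) (R : Set (F K X)) (n m : ℕ) : Submodule K (F K X) :=
  idealPiece K X N R (m - lN N n) * degSub K X (lN N n)

/-- The kernel of the reduction operator `F_2^{n,m}`: `⊥` if `m < l_N(n+1)` (so that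
`F_2^{n,m} = id`), and `V^{⊗m−l_N(n+1)} ⊗ J_{n+1}` otherwise. -/
noncomputable def ker2 (N : ℕ) (R : Set (F K X)) (n m : ℕ) : Submodule K (F K X) :=
  if m < lN N (n + 1) then ⊥
  else degSub K X (m - lN N (n + 1)) * Jspace K X N R (n + 1)

/-- The span of the normal words of length `d`, i.e. `φ(V^{⊗d})` where `φ` is the
normal-form map. -/
noncomputable def nfSub (R : Set (F K X)) (d : ℕ) : Submodule K (F K X) :=
  Submodule.span K
    {x | ∃ w : FreeMonoid X, wlen X w = d ∧ IsNormalForm K X R (wd K X w) ∧ x = wd K X w}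

/-- `Γ = (id − T2)·Σ_{i odd, 1 ≤ i ≤ k−1} ⟨T2,T1⟩^i`, the image of the element `γ1` of the
confluence algebra under the `(T1,T2)`-representation. -/
noncomputable def Gamma (T1 T2 : F K X →ₗ[K] F K X) (k : ℕ) : F K X →ₗ[K] F K X :=
  (1 - T2) * ∑ i ∈ (Finset.Icc 1 (k - 1)).filter (fun i => Odd i), altProd T2 T1 i

end CC

/-! Words are compared in the shortlex order, which is well-founded because `X` is finite, and a
reduction replaces a word by shortlex-smaller words. So reduction sequences terminate, and reducing
a word at a chosen occurrence and recursing defines a linear normal-form map `nf`. The point is that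
`nf` does not depend on the occurrence: by induction on the word, two occurrences of leading
monomials are equal, disjoint (then both reducts reduce to the same element), or overlap in a
factor `y` of length `N + m` with `1 ≤ m ≤ N - 1`. In the last case the two reducts are
`(S ⊗ id) y` and `(id ⊗ S) y`, every further step of the two alternating products of
side-confluence acts on words smaller than `y`, where `nf` is already invariant, and side-confluence
makes the two products agree. Hence `nf` vanishes on `I(R)` and fixes the span of irreducible
words, so the two subspaces are complementary; this gives (1)–(3). -/

lemma List.Lex.append_of_length_eq {α : Type*} {r : α → α → Prop} {l₁ l₂ : List α}
    (hl : l₁.length = l₂.length) (h : List.Lex r l₁ l₂) (t₁ t₂ : List α) :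
    List.Lex r (l₁ ++ t₁) (l₂ ++ t₂) := by
  induction h with
  | nil => simp at hl
  | rel hab => exact .rel hab
  | cons _ ih => exact .cons (ih (by simpa using hl))

section Alternating

variable {A : Type*} [Monoid A]

lemma altProd_succ (t s : A) (k : ℕ) : altProd t s (k + 1) = altProd s t k * s := by
  have hcomm (n : ℕ) : s * (t * s) ^ n = (s * t) ^ n * s :=
    (SemiconjBy.pow_right (mul_assoc s t s).symm n)
  rcases Nat.even_or_odd' k with ⟨i, rfl | rfl⟩
  · have h₁ : ¬ Even (2 * i + 1) := by simp [parity_simps]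
    simp [altProd, h₁, hcomm, Nat.add_div_of_dvd_right]
  · have h₁ : Even (2 * i + 1 + 1) := ⟨i + 1, by ring⟩
    have h₂ : ¬ Even (2 * i + 1) := by simp [parity_simps]
    rw [altProd, altProd, if_pos h₁, if_neg h₂, show (2 * i + 1 + 1) / 2 = i + 1 by omega,
      show (2 * i + 1) / 2 = i by omega, mul_assoc, ← hcomm, pow_succ', mul_assoc]

lemma altProd_mem {S : Submonoid A} {t s : A} (ht : t ∈ S) (hs : s ∈ S) (k : ℕ) :
    altProd t s k ∈ S := by
  unfold altProd
  split_ifs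
  · exact pow_mem (mul_mem ht hs) _
  · exact mul_mem hs (pow_mem (mul_mem ht hs) _)

end Alternating

def preservingSubmonoid {k M M' : Type*} [Semiring k] [AddCommMonoid M] [Module k M]
    [AddCommMonoid M'] [Module k M'] (p : Submodule k M) (ψ : M →ₗ[k] M') :
    Submonoid (Module.End k M) where
  carrier := {T | ∀ x ∈ p, T x ∈ p ∧ ψ (T x) = ψ x}
  mul_mem' hT hT' x hx :=
    ⟨(hT _ (hT' x hx).1).1, ((hT _ (hT' x hx).1).2).trans (hT' x hx).2⟩
  one_mem' _ hx := ⟨hx, rfl⟩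

namespace CC

open MonoidAlgebra

section Words

variable {X : Type*} [LinearOrder X]

lemma wlen_mul (u v : FreeMonoid X) : wlen X (u * v) = wlen X u + wlen X v := by
  simp [wlen]

lemma eq_one_of_wlen_eq_zero {w : FreeMonoid X} (h : wlen X w = 0) : w = 1 :=
  FreeMonoid.toList.injective (List.length_eq_zero_iff.mp h)

lemma exists_eq_mul_of_mul_eq_mul {a b c d : FreeMonoid X} (h : a * b = c * d)
    (hac : wlen X a ≤ wlen X c) : ∃ e, c = a * e ∧ b = e * d := by
  have hl : a.toList ++ b.toList = c.toList ++ d.toList := by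
    rw [← FreeMonoid.toList_mul, h, FreeMonoid.toList_mul]
  rcases List.append_eq_append_iff.mp hl with ⟨e, hc, hb⟩ | ⟨e, ha, hd⟩
  · exact ⟨FreeMonoid.ofList e, FreeMonoid.toList.injective (by simpa using hc),
      FreeMonoid.toList.injective (by simpa using hb)⟩
  · have he : e = [] := by
      simpa [wlen, ha] using hac
    subst he
    exact ⟨1, FreeMonoid.toList.injective (by simpa using ha.symm),
      FreeMonoid.toList.injective (by simpa using hd.symm)⟩

def Shortlex : FreeMonoid X → FreeMonoid X → Prop :=
  InvImage (List.Shortlex (· < ·)) FreeMonoid.toList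

namespace Shortlex

lemma of_lt {a b : FreeMonoid X} (hl : wlen X a = wlen X b) (h : a < b) : Shortlex a b :=
  List.Shortlex.of_lex hl h

lemma mul_left {a b : FreeMonoid X} (h : Shortlex a b) (u : FreeMonoid X) :
    Shortlex (u * a) (u * b) := by
  simpa [Shortlex, InvImage] using List.Shortlex.append_left h u.toList

lemma mul_right {a b : FreeMonoid X} (h : Shortlex a b) (v : FreeMonoid X) :
    Shortlex (a * v) (b * v) := by
  rcases List.shortlex_def.mp h with hlt | ⟨heq, hlex⟩
  · exact List.Shortlex.of_length_lt (by simpa using hlt)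
  · have := List.Lex.append_of_length_eq heq hlex v.toList v.toList
    exact List.Shortlex.of_lex (by simpa using heq) (by simpa using this)

lemma mul_mul {a b : FreeMonoid X} (h : Shortlex a b) (u v : FreeMonoid X) :
    Shortlex (u * a * v) (u * b * v) :=
  (h.mul_left u).mul_right v

lemma trans {a b c : FreeMonoid X} (hab : Shortlex a b) (hbc : Shortlex b c) : Shortlex a c := by
  rcases List.shortlex_def.mp hab with h₁ | ⟨h₁, h₁'⟩ <;>
    rcases List.shortlex_def.mp hbc with h₂ | ⟨h₂, h₂'⟩
  · exact List.Shortlex.of_length_lt (h₁.trans h₂)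
  · exact List.Shortlex.of_length_lt (h₂ ▸ h₁)
  · exact List.Shortlex.of_length_lt (h₁ ▸ h₂)
  · exact List.Shortlex.of_lex (h₁.trans h₂) (List.lt_trans (α := X) h₁' h₂')

end Shortlex

lemma wellFounded_shortlex [Finite X] : WellFounded (Shortlex (X := X)) :=
  InvImage.wf _ (List.Shortlex.wf wellFounded_lt)

end Words

variable {K : Type*} [Field K] {X : Type*} [Fintype X] [LinearOrder X] {N : ℕ} {R : Set (F K X)}

lemma wd_mul (u v : FreeMonoid X) : wd K X (u * v) = wd K X u * wd K X v := by
  simp [wd]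

@[simp]
lemma wd_one : wd K X 1 = 1 :=
  map_one _

lemma coeff_wd (w t : FreeMonoid X) : (wd K X w).coeff t = if w = t then 1 else 0 := by
  simp [wd, Finsupp.single_apply]

lemma linearCombination_comp_coeff_wd {M : Type*} [AddCommGroup M] [Module K M]
    (φ : FreeMonoid X → M) (w : FreeMonoid X) :
    (Finsupp.linearCombination K φ ∘ₗ (coeffLinearEquiv K).toLinearMap) (wd K X w) = φ w := by
  simp [wd]

lemma lhom_ext_wd {M : Type*} [AddCommGroup M] [Module K M] {T T' : F K X →ₗ[K] M}
    (h : ∀ w, T (wd K X w) = T' (wd K X w)) : T = T' :=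
  lhom_ext' fun w => LinearMap.ext_ring (by simpa [wd] using h w)

lemma mem_support_wd_mul_mul {u v t : FreeMonoid X} {x : F K X}
    (ht : t ∈ (wd K X u * x * wd K X v).coeff.support) :
    ∃ d ∈ x.coeff.support, t = u * d * v := by
  rw [wd, wd, of_apply, of_apply, support_coeff_mul_single _ _ (by simp),
    support_coeff_single_mul _ _ (by simp)] at ht
  simp only [Finset.mem_map, mulLeftEmbedding_apply, mulRightEmbedding_apply] at ht
  obtain ⟨_, ⟨d, hd, rfl⟩, rfl⟩ := ht
  exact ⟨d, hd, rfl⟩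

lemma coeff_wd_mul_mul (u v d : FreeMonoid X) (x : F K X) :
    (wd K X u * x * wd K X v).coeff (u * d * v) = x.coeff d := by
  rw [wd, wd, of_apply, of_apply, coeff_mul_single_eq_coeff_mul (u * d) (by simp),
    coeff_single_mul_eq_mul_coeff d (by simp)]
  simp

lemma wd_mem_degSub {w : FreeMonoid X} {m : ℕ} (h : wlen X w = m) :
    wd K X w ∈ degSub K X m := by
  intro t ht
  rw [Finsupp.mem_support_iff, coeff_wd] at ht
  rw [← h, of_not_not fun hne => ht (if_neg (Ne.symm hne))]

lemma linearIndependent_wd : LinearIndependent K (wd K X) :=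
  (basis (FreeMonoid X) K).linearIndependent

lemma span_range_wd : Submodule.span K (Set.range (wd K X)) = ⊤ :=
  (basis (FreeMonoid X) K).span_eq

lemma mem_span_wd_of_support_subset {x : F K X} {s : Set (FreeMonoid X)}
    (h : ↑x.coeff.support ⊆ s) : x ∈ Submodule.span K (wd K X '' s) :=
  Submodule.span_mono (Set.image_mono h) (mem_span_support_coeff x)

lemma le_lm_of_mem_support {g : F K X} {w : FreeMonoid X} (hw : w ∈ g.coeff.support) :
    w ≤ lm K X g := by
  obtain ⟨m, hm⟩ := Finset.max_of_mem hw
  simpa [lm, hm] using Finset.le_max_of_eq hw hm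

lemma wlen_lm (hhom : NHomogLC1 K X N R) {g : F K X} (hg : g ∈ R) : wlen X (lm K X g) = N :=
  (hhom g hg).1 _ (Finsupp.mem_support_iff.mpr (by simp [(hhom g hg).2]))

lemma shortlex_lm_of_mem_support_sub (hhom : NHomogLC1 K X N R) {g : F K X} (hg : g ∈ R)
    {d : FreeMonoid X} (hd : d ∈ (wd K X (lm K X g) - g).coeff.support) :
    Shortlex d (lm K X g) := by
  have hne : d ≠ lm K X g := by
    rintro rfl
    simp [coeff_wd, (hhom g hg).2] at hd
  have hdg : d ∈ g.coeff.support := by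
    simpa [coeff_wd, Ne.symm hne] using hd
  exact .of_lt (((hhom g hg).1 d hdg).trans (wlen_lm hhom hg).symm)
    ((le_lm_of_mem_support hdg).lt_of_ne hne)

/-- `r_{u·g·v}(u·lm(g)·v)`. -/
noncomputable def reductAt (u : FreeMonoid X) (g : F K X) (v : FreeMonoid X) : F K X :=
  wd K X u * (wd K X (lm K X g) - g) * wd K X v

lemma wd_mul_reductAt_mul (a b u v : FreeMonoid X) (g : F K X) :
    wd K X a * reductAt u g v * wd K X b = reductAt (a * u) g (v * b) := by
  simp [reductAt, wd_mul, mul_assoc]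

lemma wd_mul_mul_eq_sub_reductAt (u v : FreeMonoid X) (g : F K X) :
    wd K X u * g * wd K X v = wd K X (u * lm K X g * v) - reductAt u g v := by
  simp [reductAt, wd_mul, mul_sub, sub_mul]

lemma redMap_apply (u v : FreeMonoid X) (g f : F K X) :
    redMap K X u g v f = f - f.coeff (u * lm K X g * v) • (wd K X u * g * wd K X v) := by
  classical
  suffices redMap K X u g v = LinearMap.id - (LinearMap.smulRight
      (Finsupp.lapply (u * lm K X g * v) ∘ₗ (coeffLinearEquiv K).toLinearMap)
      (wd K X u * g * wd K X v)) by
    simp [this]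
  refine lhom_ext_wd fun w => ?_
  rw [redMap, linearCombination_comp_coeff_wd]
  by_cases hw : w = u * lm K X g * v
  · subst hw
    simp [coeff_wd, wd_mul_mul_eq_sub_reductAt u v g, reductAt]
  · simp [hw, coeff_wd]

lemma redMap_eq_self_iff {u v : FreeMonoid X} {g : F K X} (hg : g.coeff (lm K X g) ≠ 0)
    (f : F K X) : redMap K X u g v f = f ↔ f.coeff (u * lm K X g * v) = 0 := by
  have hne : wd K X u * g * wd K X v ≠ 0 := fun h => hg (by
    simpa [h] using (coeff_wd_mul_mul u v (lm K X g) g).symm)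
  rw [redMap_apply, sub_eq_self, smul_eq_zero]
  exact or_iff_left hne

/-- The triple `(u, g, v)` is laid out as the entries of the reduction lists of `NormalFormOf`. -/
def ReducibleWord (R : Set (F K X)) (w : FreeMonoid X) : Prop :=
  ∃ p : FreeMonoid X × F K X × FreeMonoid X, p.2.1 ∈ R ∧ w = p.1 * lm K X p.2.1 * p.2.2

lemma isNormalForm_iff_coeff (hhom : NHomogLC1 K X N R) {f : F K X} :
    IsNormalForm K X R f ↔ ∀ w, ReducibleWord R w → f.coeff w = 0 := by
  simp only [IsNormalForm, ReducibleWord]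
  constructor
  · rintro h _ ⟨⟨u, g, v⟩, hg, rfl⟩
    exact (redMap_eq_self_iff (by simp [(hhom g hg).2]) f).mp (h u v g hg)
  · exact fun h u v g hg => (redMap_eq_self_iff (by simp [(hhom g hg).2]) f).mpr
      (h _ ⟨⟨u, g, v⟩, hg, rfl⟩)

lemma isNormalForm_wd_iff (hhom : NHomogLC1 K X N R) {w : FreeMonoid X} :
    IsNormalForm K X R (wd K X w) ↔ ¬ ReducibleWord R w := by
  rw [isNormalForm_iff_coeff hhom]
  exact ⟨fun h hw => by simpa [coeff_wd] using h w hw,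
    fun h t ht => by simp [coeff_wd]; rintro rfl; exact h ht⟩

noncomputable def irreducibleSpan (R : Set (F K X)) : Submodule K (F K X) :=
  Submodule.span K (wd K X '' {w | ¬ ReducibleWord R w})

lemma isNormalForm_iff_mem_irreducibleSpan (hhom : NHomogLC1 K X N R) {f : F K X} :
    IsNormalForm K X R f ↔ f ∈ irreducibleSpan R := by
  rw [isNormalForm_iff_coeff hhom]
  refine ⟨fun h => mem_span_wd_of_support_subset fun w hw hred =>
    Finsupp.mem_support_iff.mp hw (h w hred), fun hf w hw => ?_⟩
  induction hf using Submodule.span_induction with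
  | mem x hx =>
    obtain ⟨t, ht, rfl⟩ := hx
    simp only [coeff_wd, ite_eq_right_iff, one_ne_zero, imp_false]
    rintro rfl
    exact ht hw
  | zero => simp
  | add x y _ _ hx hy => simp [hx, hy]
  | smul c x _ hx => simp [hx]

lemma lm_injOn (hhom : NHomogLC1 K X N R) (hred : Reduced K X R) : Set.InjOn (lm K X) R := by
  intro g₁ hg₁ g₂ hg₂ h
  by_contra hne
  have hnf := (hred g₁ hg₁).2 1 1 g₂ ⟨hg₂, Ne.symm hne⟩
  rw [redMap_eq_self_iff (by simp [(hhom g₂ hg₂).2])] at hnf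
  simp [h, coeff_wd] at hnf

variable (K) in
noncomputable def lowerSpan (y : FreeMonoid X) : Submodule K (F K X) :=
  Submodule.span K (wd K X '' {z | Shortlex z y})

lemma lowerSpan_mono {y z : FreeMonoid X} (h : Shortlex z y) :
    lowerSpan K z ≤ lowerSpan K y :=
  Submodule.span_mono (Set.image_mono fun _ ht => Shortlex.trans ht h)

lemma shortlex_of_mem_support_reductAt (hhom : NHomogLC1 K X N R) {g : F K X} (hg : g ∈ R)
    {u v t : FreeMonoid X} (ht : t ∈ (reductAt u g v).coeff.support) :
    Shortlex t (u * lm K X g * v) := by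
  obtain ⟨d, hd, rfl⟩ := mem_support_wd_mul_mul ht
  exact (shortlex_lm_of_mem_support_sub hhom hg hd).mul_mul u v

lemma reductAt_mem_lowerSpan (hhom : NHomogLC1 K X N R) {g : F K X} (hg : g ∈ R)
    (u v : FreeMonoid X) : reductAt u g v ∈ lowerSpan K (u * lm K X g * v) :=
  mem_span_wd_of_support_subset fun _ ht => shortlex_of_mem_support_reductAt hhom hg ht

open Classical in
/-- The guard `Shortlex t w` only makes the recursion well-founded: it always holds when `R` is
homogeneous with leading coefficients `1`. -/
noncomputable def nfWord (R : Set (F K X)) : FreeMonoid X → F K X :=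
  wellFounded_shortlex.fix fun w nfBelow =>
    if h : ReducibleWord R w then
      (reductAt h.choose.1 h.choose.2.1 h.choose.2.2).coeff.sum fun t c =>
        if ht : Shortlex t w then c • nfBelow t ht else 0
    else wd K X w

noncomputable def nf (R : Set (F K X)) : F K X →ₗ[K] F K X :=
  Finsupp.linearCombination K (nfWord R) ∘ₗ (coeffLinearEquiv K).toLinearMap

lemma nf_wd_of_not_reducible {w : FreeMonoid X} (h : ¬ ReducibleWord R w) :
    nf R (wd K X w) = wd K X w := by
  rw [nf, linearCombination_comp_coeff_wd, nfWord, WellFounded.fix_eq, dif_neg h]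

lemma exists_nf_wd_eq_nf_reductAt (hhom : NHomogLC1 K X N R) {w : FreeMonoid X}
    (h : ReducibleWord R w) :
    ∃ p : FreeMonoid X × F K X × FreeMonoid X, p.2.1 ∈ R ∧
      w = p.1 * lm K X p.2.1 * p.2.2 ∧ nf R (wd K X w) = nf R (reductAt p.1 p.2.1 p.2.2) := by
  obtain ⟨hp, hw⟩ := h.choose_spec
  refine ⟨h.choose, hp, hw, ?_⟩
  rw [nf, linearCombination_comp_coeff_wd, nfWord, WellFounded.fix_eq, dif_pos h]
  refine Finsupp.sum_congr fun t ht => ?_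
  rw [dif_pos (hw ▸ shortlex_of_mem_support_reductAt hhom hp ht)]
  rfl

lemma nf_mem_irreducibleSpan (hhom : NHomogLC1 K X N R) (x : F K X) :
    nf R x ∈ irreducibleSpan R := by
  have hword (w : FreeMonoid X) : nf R (wd K X w) ∈ irreducibleSpan R := by
    induction w using (wellFounded_shortlex (X := X)).induction with | _ w ih
    by_cases h : ReducibleWord R w
    · obtain ⟨⟨u, g, v⟩, hg, rfl, hnf⟩ := exists_nf_wd_eq_nf_reductAt hhom h
      have hle : lowerSpan K (u * lm K X g * v) ≤ (irreducibleSpan R).comap (nf R) :=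
        Submodule.span_le.mpr (by rintro _ ⟨z, hz, rfl⟩; exact ih z hz)
      exact hnf ▸ hle (reductAt_mem_lowerSpan hhom hg u v)
    · rw [nf_wd_of_not_reducible h]
      exact Submodule.subset_span ⟨w, h, rfl⟩
  have htop : ⊤ ≤ (irreducibleSpan R).comap (nf R) := by
    rw [← span_range_wd]
    exact Submodule.span_le.mpr (Set.range_subset_iff.mpr hword)
  exact htop Submodule.mem_top

lemma nf_eq_self {x : F K X} (hx : x ∈ irreducibleSpan R) : nf R x = x :=
  LinearMap.eqOn_span' (f := nf R) (g := LinearMap.id)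
    (by rintro _ ⟨w, hw, rfl⟩; exact nf_wd_of_not_reducible hw) hx

lemma Sop_wd (w : FreeMonoid X) : Sop K X R (wd K X w) = wd K X w ∨
    ∃ f ∈ R, lm K X f = w ∧ Sop K X R (wd K X w) = wd K X w - f := by
  classical
  rw [Sop, linearCombination_comp_coeff_wd]
  by_cases h : ∃ f ∈ R, lm K X f = w
  · exact .inr ⟨h.choose, h.choose_spec.1, h.choose_spec.2, dif_pos h⟩
  · exact .inl (dif_neg h)

lemma Sop_wd_lm (hinj : Set.InjOn (lm K X) R) {g : F K X} (hg : g ∈ R) :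
    Sop K X R (wd K X (lm K X g)) = wd K X (lm K X g) - g := by
  classical
  have h : ∃ f ∈ R, lm K X f = lm K X g := ⟨g, hg, rfl⟩
  rw [Sop, linearCombination_comp_coeff_wd, dif_pos h, hinj h.choose_spec.1 hg h.choose_spec.2]

lemma exists_eq_mul_of_wlen_eq_add {z : FreeMonoid X} {a b : ℕ} (h : wlen X z = a + b) :
    ∃ p s, z = p * s ∧ wlen X p = a ∧ wlen X s = b := by
  refine ⟨FreeMonoid.ofList (z.toList.take a), FreeMonoid.ofList (z.toList.drop a),
    FreeMonoid.toList.injective (by simp), ?_, ?_⟩ <;> simp [wlen] at h ⊢ <;> omega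

lemma applyLeft_wd_mul (S : F K X →ₗ[K] F K X) {p s : FreeMonoid X} {a b : ℕ}
    (hp : wlen X p = a) (hs : wlen X s = b) :
    applyLeft K X S a b (wd K X (p * s)) = S (wd K X p) * wd K X s := by
  rw [applyLeft, linearCombination_comp_coeff_wd, if_pos (by rw [wlen_mul, hp, hs])]
  subst hp
  simp [wlen]

lemma applyRight_wd_mul (S : F K X →ₗ[K] F K X) {p s : FreeMonoid X} {a b : ℕ}
    (hp : wlen X p = a) (hs : wlen X s = b) :
    applyRight K X S a b (wd K X (p * s)) = wd K X p * S (wd K X s) := by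
  rw [applyRight, linearCombination_comp_coeff_wd, if_pos (by rw [wlen_mul, hp, hs])]
  subst hp
  simp [wlen]

def IsRewritingOp (R : Set (F K X)) (T : F K X →ₗ[K] F K X) : Prop :=
  ∀ z, T (wd K X z) = wd K X z ∨
    ∃ a b : FreeMonoid X, ∃ f ∈ R, z = a * lm K X f * b ∧ T (wd K X z) = reductAt a f b

lemma isRewritingOp_applyLeft (a b : ℕ) : IsRewritingOp R (applyLeft K X (Sop K X R) a b) := by
  intro z
  by_cases hz : wlen X z = a + b
  · obtain ⟨p, s, rfl, hp, hs⟩ := exists_eq_mul_of_wlen_eq_add hz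
    rw [applyLeft_wd_mul _ hp hs]
    rcases Sop_wd (R := R) p with h | ⟨f, hf, rfl, h⟩
    · exact .inl (by rw [h, wd_mul])
    · exact .inr ⟨1, s, f, hf, by simp, by simp [h, reductAt]⟩
  · exact .inl (by rw [applyLeft, linearCombination_comp_coeff_wd, if_neg hz])

lemma isRewritingOp_applyRight (a b : ℕ) : IsRewritingOp R (applyRight K X (Sop K X R) a b) := by
  intro z
  by_cases hz : wlen X z = a + b
  · obtain ⟨p, s, rfl, hp, hs⟩ := exists_eq_mul_of_wlen_eq_add hz
    rw [applyRight_wd_mul _ hp hs]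
    rcases Sop_wd (R := R) s with h | ⟨f, hf, rfl, h⟩
    · exact .inl (by rw [h, wd_mul])
    · exact .inr ⟨p, 1, f, hf, by simp, by simp [h, reductAt]⟩
  · exact .inl (by rw [applyRight, linearCombination_comp_coeff_wd, if_neg hz])

def NfInvariantAt (R : Set (F K X)) (w : FreeMonoid X) : Prop :=
  ∀ u v : FreeMonoid X, ∀ g ∈ R, w = u * lm K X g * v →
    nf R (reductAt u g v) = nf R (wd K X w)

section Confluence

variable {w : FreeMonoid X} (hbelow : ∀ w', Shortlex w' w → NfInvariantAt R w')
include hbelow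

lemma mem_preservingSubmonoid_of_isRewritingOp (hhom : NHomogLC1 K X N R)
    {T : F K X →ₗ[K] F K X} (hT : IsRewritingOp R T) {u y v : FreeMonoid X}
    (hw : w = u * y * v) :
    T ∈ preservingSubmonoid (lowerSpan K y)
      (nf R ∘ₗ LinearMap.mulLeftRight K (wd K X u, wd K X v)) := by
  set ψ := nf R ∘ₗ LinearMap.mulLeftRight K (wd K X u, wd K X v)
  intro x hx
  constructor
  · refine (Submodule.span_le.mpr ?_ : lowerSpan K y ≤ (lowerSpan K y).comap T) hx
    rintro _ ⟨z, hz, rfl⟩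
    rcases hT z with h | ⟨a, b, f, hf, rfl, h⟩
    · rw [SetLike.mem_coe, Submodule.mem_comap, h]
      exact Submodule.subset_span ⟨_, hz, rfl⟩
    · rw [SetLike.mem_coe, Submodule.mem_comap, h]
      exact lowerSpan_mono hz (reductAt_mem_lowerSpan hhom hf a b)
  · refine LinearMap.eqOn_span' (f := ψ ∘ₗ T) (g := ψ) ?_ hx
    rintro _ ⟨z, hz, rfl⟩
    rcases hT z with h | ⟨a, b, f, hf, rfl, h⟩
    · simp [h]
    · have := hbelow _ (hw ▸ hz.mul_mul u v) (u * a) (b * v) f hf (by simp [mul_assoc])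
      rw [LinearMap.comp_apply, h]
      simp only [ψ, LinearMap.comp_apply, LinearMap.mulLeftRight_apply, wd_mul_reductAt_mul,
        this, ← wd_mul]

lemma nf_reductAt_eq_of_disjoint (hhom : NHomogLC1 K X N R) {u v z : FreeMonoid X}
    {g₁ g₂ : F K X} (hg₁ : g₁ ∈ R) (hg₂ : g₂ ∈ R)
    (hw : w = u * lm K X g₁ * z * lm K X g₂ * v) :
    nf R (reductAt u g₁ (z * lm K X g₂ * v)) =
      nf R (reductAt (u * lm K X g₁ * z) g₂ v) := by
  have h₁ : Set.EqOn
      (nf R ∘ₗ LinearMap.mulLeftRight K (wd K X u, wd K X (z * lm K X g₂ * v)))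
      (nf R ∘ₗ LinearMap.mulLeftRight K (wd K X u, reductAt z g₂ v))
      (lowerSpan K (lm K X g₁)) := by
    refine LinearMap.eqOn_span' ?_
    rintro _ ⟨d, hd, rfl⟩
    have := hbelow _
      (by rw [hw]; simpa only [mul_assoc] using hd.mul_mul u (z * lm K X g₂ * v))
      (u * d * z) v g₂ hg₂ rfl
    simpa [reductAt, wd_mul, mul_assoc] using this.symm
  have h₂ : Set.EqOn
      (nf R ∘ₗ LinearMap.mulLeftRight K (wd K X (u * lm K X g₁ * z), wd K X v))
      (nf R ∘ₗ LinearMap.mulLeftRight K (reductAt u g₁ z, wd K X v))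
      (lowerSpan K (lm K X g₂)) := by
    refine LinearMap.eqOn_span' ?_
    rintro _ ⟨e, he, rfl⟩
    have := hbelow _
      (by rw [hw]; simpa only [mul_assoc] using he.mul_mul (u * lm K X g₁ * z) v)
      u (z * e * v) g₁ hg₁ (by simp [mul_assoc])
    simpa [reductAt, wd_mul, mul_assoc] using this.symm
  have hlead (g : F K X) (hg : g ∈ R) : wd K X (lm K X g) - g ∈ lowerSpan K (lm K X g) := by
    simpa [reductAt] using reductAt_mem_lowerSpan hhom hg 1 1
  calc nf R (reductAt u g₁ (z * lm K X g₂ * v))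
      = (nf R ∘ₗ LinearMap.mulLeftRight K (wd K X u, wd K X (z * lm K X g₂ * v)))
          (wd K X (lm K X g₁) - g₁) := rfl
    _ = (nf R ∘ₗ LinearMap.mulLeftRight K (reductAt u g₁ z, wd K X v))
          (wd K X (lm K X g₂) - g₂) := by
        rw [h₁ (hlead g₁ hg₁)]
        simp [reductAt, mul_assoc]
    _ = nf R (reductAt (u * lm K X g₁ * z) g₂ v) := by
        rw [← h₂ (hlead g₂ hg₂)]
        simp [reductAt, mul_assoc]

lemma nf_reductAt_eq_of_overlap (hhom : NHomogLC1 K X N R) (hred : Reduced K X R)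
    (hside : SideConfluent K X N R) {u v c q : FreeMonoid X} {g₁ g₂ : F K X}
    (hg₁ : g₁ ∈ R) (hg₂ : g₂ ∈ R) (hy : lm K X g₁ * q = c * lm K X g₂)
    (hc : 1 ≤ wlen X c) (hcN : wlen X c < N)
    (hw : w = u * (lm K X g₁ * q) * v) :
    nf R (reductAt u g₁ (q * v)) = nf R (reductAt (u * c) g₂ v) := by
  set m := wlen X c
  have hq : wlen X q = m := by
    have := congrArg (wlen X) hy
    simp only [wlen_mul, wlen_lm hhom hg₁, wlen_lm hhom hg₂] at this
    omega
  set ψ := nf R ∘ₗ LinearMap.mulLeftRight K (wd K X u, wd K X v)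
  have hL : applyLeft K X (Sop K X R) N m (wd K X (lm K X g₁ * q)) = reductAt 1 g₁ q := by
    rw [applyLeft_wd_mul _ (wlen_lm hhom hg₁) hq, Sop_wd_lm (lm_injOn hhom hred) hg₁]
    simp [reductAt]
  have hR : applyRight K X (Sop K X R) m N (wd K X (lm K X g₁ * q)) = reductAt c g₂ 1 := by
    rw [hy, applyRight_wd_mul _ rfl (wlen_lm hhom hg₂), Sop_wd_lm (lm_injOn hhom hred) hg₂]
    simp [reductAt]
  have hTL :=
    mem_preservingSubmonoid_of_isRewritingOp hbelow hhom (isRewritingOp_applyLeft N m) hw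
  have hTR :=
    mem_preservingSubmonoid_of_isRewritingOp hbelow hhom (isRewritingOp_applyRight m N) hw
  have hmemL : reductAt 1 g₁ q ∈ lowerSpan K (lm K X g₁ * q) := by
    simpa using reductAt_mem_lowerSpan hhom hg₁ 1 q
  have hmemR : reductAt c g₂ 1 ∈ lowerSpan K (lm K X g₁ * q) := by
    simpa [hy] using reductAt_mem_lowerSpan hhom hg₂ c 1
  obtain ⟨k, hk, hconf⟩ := hside m hc (by omega)
  obtain ⟨j, rfl⟩ : ∃ j, k = j + 1 := ⟨k - 1, by omega⟩
  have key := congrArg ψ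
    (hconf (wd K X (lm K X g₁ * q)) (wd_mem_degSub (by rw [wlen_mul, wlen_lm hhom hg₁, hq])))
  -- The two alternating products begin with the two reducts of `y`; every later factor acts
  -- inside `lowerSpan K y`, where it does not change `ψ`.
  rw [altProd_succ, altProd_succ, Module.End.mul_apply, Module.End.mul_apply, hL, hR,
    (altProd_mem hTL hTR j _ hmemL).2, (altProd_mem hTR hTL j _ hmemR).2] at key
  simpa [ψ, wd_mul_reductAt_mul] using key

lemma nf_reductAt_eq_of_wlen_le (hhom : NHomogLC1 K X N R) (hred : Reduced K X R)
    (hside : SideConfluent K X N R) {u₁ v₁ u₂ v₂ : FreeMonoid X} {g₁ g₂ : F K X}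
    (hg₁ : g₁ ∈ R) (hg₂ : g₂ ∈ R) (hw₁ : w = u₁ * lm K X g₁ * v₁)
    (hw₂ : w = u₂ * lm K X g₂ * v₂)
    (hu : wlen X u₁ ≤ wlen X u₂) :
    nf R (reductAt u₁ g₁ v₁) = nf R (reductAt u₂ g₂ v₂) := by
  have hN₁ := wlen_lm hhom hg₁
  have hN₂ := wlen_lm hhom hg₂
  obtain ⟨c, rfl, hc⟩ := exists_eq_mul_of_mul_eq_mul
    (by simpa only [mul_assoc] using hw₁.symm.trans hw₂) hu
  rcases le_or_gt N (wlen X c) with hcN | hcN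
  · obtain ⟨z, rfl, rfl⟩ := exists_eq_mul_of_mul_eq_mul hc (by omega)
    simpa only [mul_assoc] using
      nf_reductAt_eq_of_disjoint hbelow hhom hg₁ hg₂ (by simp only [hw₁, mul_assoc])
  obtain ⟨s, hs₁, hs₂⟩ := exists_eq_mul_of_mul_eq_mul hc.symm (by omega)
  have hs : wlen X s + wlen X c = N := by
    simpa [wlen_mul, hN₁, add_comm] using (congrArg (wlen X) hs₁).symm
  obtain ⟨q, hq, rfl⟩ := exists_eq_mul_of_mul_eq_mul hs₂.symm (by omega)
  rcases Nat.eq_zero_or_pos (wlen X c) with hc0 | hc0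
  · have hq0 : wlen X q = 0 := by
      have := congrArg (wlen X) hq
      simp only [wlen_mul] at this
      omega
    obtain rfl := eq_one_of_wlen_eq_zero hc0
    obtain rfl := eq_one_of_wlen_eq_zero hq0
    obtain rfl : g₁ = g₂ := lm_injOn hhom hred hg₁ hg₂ (by simp [hs₁, hq])
    simp
  · exact nf_reductAt_eq_of_overlap hbelow hhom hred hside hg₁ hg₂
      (by rw [hs₁, hq, mul_assoc]) hc0 hcN (by simp only [hw₁, mul_assoc])

end Confluence

theorem nfInvariantAt (hhom : NHomogLC1 K X N R) (hred : Reduced K X R)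
    (hside : SideConfluent K X N R) (w : FreeMonoid X) : NfInvariantAt R w := by
  induction w using (wellFounded_shortlex (X := X)).induction with | _ w hbelow
  intro u v g hg hw
  obtain ⟨⟨u', g', v'⟩, hg', hw', hnf⟩ :=
    exists_nf_wd_eq_nf_reductAt hhom ⟨(u, g, v), hg, hw⟩
  rw [hnf]
  rcases le_total (wlen X u) (wlen X u') with h | h
  · exact nf_reductAt_eq_of_wlen_le hbelow hhom hred hside hg hg' hw hw' h
  · exact (nf_reductAt_eq_of_wlen_le hbelow hhom hred hside hg' hg hw' hw h).symm

lemma support_redMap_subset (u v : FreeMonoid X) (g f : F K X) :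
    (redMap K X u g v f).coeff.support ⊆
      f.coeff.support.erase (u * lm K X g * v) ∪ (reductAt u g v).coeff.support := by
  intro t ht
  rw [Finsupp.mem_support_iff, redMap_apply, wd_mul_mul_eq_sub_reductAt] at ht
  rw [Finset.mem_union, Finset.mem_erase, Finsupp.mem_support_iff, Finsupp.mem_support_iff]
  by_contra! h
  apply ht
  by_cases htw : t = u * lm K X g * v
  · subst htw
    simp [coeff_wd, h.2]
  · simp [coeff_wd, Ne.symm htw, h.1 htw, h.2]

lemma exists_foldr_redMap_isNormalForm (hhom : NHomogLC1 K X N R) (f : F K X) :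
    ∃ L : List (FreeMonoid X × F K X × FreeMonoid X), (∀ p ∈ L, p.2.1 ∈ R) ∧
      IsNormalForm K X R (L.foldr (fun p h => redMap K X p.1 p.2.1 p.2.2 h) f) := by
  classical
  suffices ∀ s : Multiset (FreeMonoid X), ∀ f : F K X, f.coeff.support.val ≤ s →
      ∃ L : List (FreeMonoid X × F K X × FreeMonoid X), (∀ p ∈ L, p.2.1 ∈ R) ∧
        IsNormalForm K X R (L.foldr (fun p h => redMap K X p.1 p.2.1 p.2.2 h) f) from
    this _ f le_rfl
  intro s
  induction s using (wellFounded_shortlex (X := X)).cutExpand.induction with | _ s ih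
  intro f hfs
  by_cases hf : IsNormalForm K X R f
  · exact ⟨[], by simp, hf⟩
  obtain ⟨_, ⟨⟨u, g, v⟩, hg, rfl⟩, ht⟩ :
      ∃ t, ReducibleWord R t ∧ f.coeff t ≠ 0 := by
    simpa [isNormalForm_iff_coeff hhom] using hf
  dsimp only at hg ht
  set E := (reductAt u g v).coeff.support
  have hts : u * lm K X g * v ∈ s := Multiset.mem_of_le hfs (Finsupp.mem_support_iff.mpr ht)
  have hcut : Relation.CutExpand Shortlex (s.erase (u * lm K X g * v) + E.val) s :=
    ⟨E.val, _, fun _ ht' => shortlex_of_mem_support_reductAt hhom hg ht', by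
      rw [add_right_comm, add_comm _ {_}, Multiset.singleton_add, Multiset.cons_erase hts]⟩
  have hle : (redMap K X u g v f).coeff.support.val ≤ s.erase (u * lm K X g * v) + E.val :=
    calc _ ≤ (f.coeff.support.erase (u * lm K X g * v) ∪ E).val :=
          Finset.val_le_iff.mpr (support_redMap_subset u v g f)
      _ ≤ (f.coeff.support.erase (u * lm K X g * v)).val + E.val :=
          Multiset.ndunion_le_add _ _
      _ ≤ _ := by gcongr; exact Multiset.erase_le_erase _ hfs
  obtain ⟨L, hL, hnf⟩ := ih _ hcut _ hle
  refine ⟨L ++ [(u, g, v)], fun p hp => ?_, by simpa using hnf⟩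
  rcases List.mem_append.mp hp with hp | hp
  · exact hL p hp
  · rw [List.mem_singleton.mp hp]
    exact hg

lemma sub_foldr_redMap_mem_idealSpan (L : List (FreeMonoid X × F K X × FreeMonoid X))
    (hL : ∀ p ∈ L, p.2.1 ∈ R) (f : F K X) :
    f - L.foldr (fun p h => redMap K X p.1 p.2.1 p.2.2 h) f ∈ idealSpan K X R := by
  induction L with
  | nil => simp
  | cons p L ih =>
    have hstep : L.foldr (fun p h => redMap K X p.1 p.2.1 p.2.2 h) f -
        redMap K X p.1 p.2.1 p.2.2 (L.foldr (fun p h => redMap K X p.1 p.2.1 p.2.2 h) f) ∈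
        idealSpan K X R := by
      rw [redMap_apply, sub_sub_cancel]
      exact Submodule.smul_mem _ _
        (Submodule.subset_span ⟨p.1, p.2.2, p.2.1, hL p (by simp), rfl⟩)
    simpa using Submodule.add_mem _ (ih fun q hq => hL q (by simp [hq])) hstep

section SideConfluent

variable (hhom : NHomogLC1 K X N R) (hred : Reduced K X R) (hside : SideConfluent K X N R)
include hhom hred hside

lemma nf_eq_zero_of_mem_idealSpan {x : F K X} (hx : x ∈ idealSpan K X R) : nf R x = 0 := by
  induction hx using Submodule.span_induction with
  | mem x hx =>
    obtain ⟨u, v, g, hg, rfl⟩ := hx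
    rw [wd_mul_mul_eq_sub_reductAt, map_sub, nfInvariantAt hhom hred hside _ u v g hg rfl,
      sub_self]
  | zero => simp
  | add x y _ _ hx hy => simp [hx, hy]
  | smul c x _ hx => simp [hx]

lemma nf_foldr_redMap (L : List (FreeMonoid X × F K X × FreeMonoid X))
    (hL : ∀ p ∈ L, p.2.1 ∈ R) (f : F K X) :
    nf R (L.foldr (fun p h => redMap K X p.1 p.2.1 p.2.2 h) f) = nf R f := by
  rw [← sub_eq_zero, ← map_sub]
  simpa using nf_eq_zero_of_mem_idealSpan hhom hred hside
    (Submodule.neg_mem _ (sub_foldr_redMap_mem_idealSpan L hL f))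

lemma eq_nf_of_normalFormOf {f g : F K X} (h : NormalFormOf K X R f g) : g = nf R f := by
  obtain ⟨hg, L, hL, rfl⟩ := h
  rw [← nf_foldr_redMap hhom hred hside L hL f,
    nf_eq_self ((isNormalForm_iff_mem_irreducibleSpan hhom).mp hg)]

lemma normalFormOf_nf (f : F K X) : NormalFormOf K X R f (nf R f) := by
  obtain ⟨L, hL, hnf⟩ := exists_foldr_redMap_isNormalForm hhom f
  have h := eq_nf_of_normalFormOf hhom hred hside ⟨hnf, L, hL, rfl⟩
  exact ⟨h ▸ hnf, L, hL, h.symm⟩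

lemma sub_nf_mem_idealSpan (f : F K X) : f - nf R f ∈ idealSpan K X R := by
  obtain ⟨-, L, hL, h⟩ := normalFormOf_nf hhom hred hside f
  exact h ▸ sub_foldr_redMap_mem_idealSpan L hL f

lemma isCompl_irreducibleSpan_idealSpan : IsCompl (irreducibleSpan R) (idealSpan K X R) where
  disjoint := Submodule.disjoint_def.mpr fun _ hx hI =>
    (nf_eq_self hx).symm.trans (nf_eq_zero_of_mem_idealSpan hhom hred hside hI)
  codisjoint := codisjoint_iff.mpr <| eq_top_iff.mpr fun x _ =>
    Submodule.mem_sup.mpr ⟨nf R x, nf_mem_irreducibleSpan hhom x, x - nf R x,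
      sub_nf_mem_idealSpan hhom hred hside x, add_sub_cancel _ _⟩

end SideConfluent

lemma span_range_wd_normalForm (hhom : NHomogLC1 K X N R) :
    Submodule.span K (Set.range fun w : {w // IsNormalForm K X R (wd K X w)} => wd K X w.1) =
      irreducibleSpan R := by
  rw [irreducibleSpan]
  congr 1
  ext x
  simp [isNormalForm_wd_iff hhom]

end CC

open CC in
theorem stmt5_general (K : Type*) [Field K] (X : Type*) [Fintype X] [LinearOrder X]
    (N : ℕ) (R : Set (F K X))
    (hhom : NHomogLC1 K X N R) (hred : Reduced K X R)
    (hside : SideConfluent K X N R) :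
    (∀ f : F K X, ∃! g : F K X, NormalFormOf K X R f g) ∧
    (LinearIndependent K
        (fun w : {w : FreeMonoid X // IsNormalForm K X R (wd K X w)} =>
          (idealSpan K X R).mkQ (wd K X w.1)) ∧
      Submodule.span K
        (Set.range (fun w : {w : FreeMonoid X // IsNormalForm K X R (wd K X w)} =>
          (idealSpan K X R).mkQ (wd K X w.1))) = ⊤) ∧
    (∀ f g : F K X, NormalFormOf K X R f g → (f ∈ idealSpan K X R ↔ g = 0)) := by
  have hcompl := isCompl_irreducibleSpan_idealSpan hhom hred hside
  have hspan := span_range_wd_normalForm hhom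
  refine ⟨fun f => ⟨nf R f, normalFormOf_nf hhom hred hside f,
    fun g hg => eq_nf_of_normalFormOf hhom hred hside hg⟩, ⟨?_, ?_⟩, fun f g hfg => ?_⟩
  · refine (linearIndependent_wd.comp _ Subtype.val_injective).map ?_
    rw [Submodule.ker_mkQ]
    exact hspan ▸ hcompl.disjoint
  · rw [Set.range_comp', ← Submodule.map_span, hspan, Submodule.map_mkQ_eq_top]
    exact hcompl.symm.codisjoint.eq_top
  · rw [eq_nf_of_normalFormOf hhom hred hside hfg]
    exact ⟨nf_eq_zero_of_mem_idealSpan hhom hred hside,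
      fun h => by simpa [h] using sub_nf_mem_idealSpan hhom hred hside f⟩

open CC in
/-- Diamond Lemma for side-confluent presentations.  Suppose the reduced
`N`-homogeneous presentation `⟨X|R⟩` (leading coefficients `1`) is side-confluent.  Then:
(1) every element of `K⟨X⟩` admits a unique normal form for `⟨X|R⟩`;
(2) the images in `A = K⟨X⟩/I(R)` of the words that are normal forms form a `K`-basis of `A`;
(3) an element `f` of `K⟨X⟩` belongs to `I(R)` if and only if its normal form equals `0`. -/
theorem stmt5 (K : Type*) [Field K] (X : Type*) [Fintype X] [LinearOrder X]
    (N : ℕ) (hN : 2 ≤ N) (R : Set (F K X))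
    (hhom : NHomogLC1 K X N R) (hred : Reduced K X R)
    (hside : SideConfluent K X N R) :
    (∀ f : F K X, ∃! g : F K X, NormalFormOf K X R f g) ∧
    (LinearIndependent K
        (fun w : {w : FreeMonoid X // IsNormalForm K X R (wd K X w)} =>
          (idealSpan K X R).mkQ (wd K X w.1)) ∧
      Submodule.span K
        (Set.range (fun w : {w : FreeMonoid X // IsNormalForm K X R (wd K X w)} =>
          (idealSpan K X R).mkQ (wd K X w.1))) = ⊤) ∧
    (∀ f g : F K X, NormalFormOf K X R f g → (f ∈ idealSpan K X R ↔ g = 0)) :=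
  stmt5_general K X N R hhom hred hside
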